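/- arXiv:1301.5579 — 3 statements merged into one kernel-verified Lean document; each statement's English description precedes it below -/
import Mathlib

section
/- (LeCam's inequality) Let S = I_1 + ... + I_n be a sum of independent Bernoulli random variables with P(I_i = 1) = p_i, and let Λ be a Poisson random variable with mean p_1 + ... + p_n. Then the total variation distance between the distributions of S and Λ satisfies d_TV(S, Λ) ≤ Σ_i p_i². -/
open MeasureTheory ProbabilityTheory Finset
open scoped NNReal ENNReal

/-!
A Bernoulli(p) law and Poisson(p) agree up to `p²` on every set: the Bernoulli law puts less
mass than the Poisson law on every atom except `1`, where the excess is `p (1 - e^{-p}) ≤ p²`.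
Total variation closeness is subadditive under convolution (integrate the bound for one factor
against the other), the law of a sum of independent variables is the convolution of their laws,
and `Po(a) ∗ Po(b) = Po(a + b)`; induction on the number of summands concludes.
-/

def TVDistLE {α : Type*} [MeasurableSpace α] (μ ν : Measure α) (ε : ℝ) : Prop :=
  ∀ A, MeasurableSet A → |μ.real A - ν.real A| ≤ ε

namespace TVDistLE

variable {α : Type*} [MeasurableSpace α] {μ ν ρ : Measure α} {ε δ : ℝ}

lemma refl (μ : Measure α) : TVDistLE μ μ 0 := fun A _ ↦ by simp

lemma trans (h₁ : TVDistLE μ ν ε) (h₂ : TVDistLE ν ρ δ) : TVDistLE μ ρ (ε + δ) :=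
  fun A hA ↦ (abs_sub_le _ _ _).trans (add_le_add (h₁ A hA) (h₂ A hA))

lemma of_forall_sub_le [IsProbabilityMeasure μ] [IsProbabilityMeasure ν]
    (h : ∀ A, MeasurableSet A → μ.real A - ν.real A ≤ ε) : TVDistLE μ ν ε := by
  intro A hA
  have hcompl := h Aᶜ hA.compl
  rw [probReal_compl_eq_one_sub hA, probReal_compl_eq_one_sub hA] at hcompl
  exact abs_le.mpr ⟨by linarith, h A hA⟩

end TVDistLE

section Convolution

variable {M : Type*} [AddMonoid M] [MeasurableSpace M] [MeasurableAdd₂ M]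

lemma measurable_measure_preimage_add_left (ν : Measure M) [SFinite ν] {A : Set M}
    (hA : MeasurableSet A) : Measurable fun x ↦ ν ((x + ·) ⁻¹' A) :=
  measurable_measure_prodMk_left (measurable_add hA)

lemma MeasureTheory.Measure.conv_apply (μ ν : Measure M) [SFinite ν] {A : Set M} (hA : MeasurableSet A) :
    (μ ∗ ν) A = ∫⁻ x, ν ((x + ·) ⁻¹' A) ∂μ := by
  rw [Measure.conv, Measure.map_apply measurable_add hA, Measure.prod_apply (measurable_add hA)]
  rfl

lemma MeasureTheory.Measure.conv_real_apply (μ ν : Measure M) [IsFiniteMeasure ν] {A : Set M}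
    (hA : MeasurableSet A) : (μ ∗ ν).real A = ∫ x, ν.real ((x + ·) ⁻¹' A) ∂μ := by
  rw [measureReal_def, Measure.conv_apply μ ν hA, ← integral_toReal
    (measurable_measure_preimage_add_left ν hA).aemeasurable
    (ae_of_all _ fun _ ↦ measure_lt_top _ _)]
  rfl

lemma integrable_measureReal_preimage_add_left (μ ν : Measure M) [IsFiniteMeasure μ]
    [IsFiniteMeasure ν] {A : Set M} (hA : MeasurableSet A) :
    Integrable (fun x ↦ ν.real ((x + ·) ⁻¹' A)) μ :=
  .of_bound (measurable_measure_preimage_add_left ν hA).ennreal_toReal.aestronglyMeasurable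
    (ν.real Set.univ) (ae_of_all _ fun _ ↦ by
      rw [Real.norm_of_nonneg measureReal_nonneg]; exact measureReal_mono (Set.subset_univ _))

lemma TVDistLE.conv_left (μ : Measure M) [IsProbabilityMeasure μ] {ν ν' : Measure M}
    [IsFiniteMeasure ν] [IsFiniteMeasure ν'] {ε : ℝ} (h : TVDistLE ν ν' ε) :
    TVDistLE (μ ∗ ν) (μ ∗ ν') ε := by
  intro A hA
  rw [Measure.conv_real_apply μ ν hA, Measure.conv_real_apply μ ν' hA, ← integral_sub
    (integrable_measureReal_preimage_add_left μ ν hA)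
    (integrable_measureReal_preimage_add_left μ ν' hA)]
  simpa using norm_integral_le_of_norm_le_const (μ := μ)
    (f := fun x ↦ ν.real ((x + ·) ⁻¹' A) - ν'.real ((x + ·) ⁻¹' A))
    (ae_of_all _ fun x ↦ h _ (measurable_const_add x hA))

end Convolution

lemma TVDistLE.conv {M : Type*} [AddCommMonoid M] [MeasurableSpace M] [MeasurableAdd₂ M]
    {μ μ' ν ν' : Measure M} [IsProbabilityMeasure μ] [IsFiniteMeasure μ'] [IsFiniteMeasure ν]
    [IsProbabilityMeasure ν'] {ε δ : ℝ} (hμ : TVDistLE μ μ' ε) (hν : TVDistLE ν ν' δ) :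
    TVDistLE (μ ∗ ν) (μ' ∗ ν') (ε + δ) := by
  rw [add_comm]
  refine (hν.conv_left μ).trans ?_
  rw [Measure.conv_comm μ, Measure.conv_comm μ']
  exact hμ.conv_left ν'

noncomputable def bernoulliNat (p : ℝ≥0) : Measure ℕ :=
  (1 - (p : ℝ≥0∞)) • Measure.dirac 0 + (p : ℝ≥0∞) • Measure.dirac 1

lemma isProbabilityMeasure_bernoulliNat {p : ℝ≥0} (hp : p ≤ 1) :
    IsProbabilityMeasure (bernoulliNat p) :=
  ⟨by simp [bernoulliNat, tsub_add_cancel_of_le (ENNReal.coe_le_one_iff.mpr hp)]⟩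

lemma bernoulliNat_real_apply {p : ℝ≥0} (hp : p ≤ 1) (A : Set ℕ) :
    (bernoulliNat p).real A = (1 - p) * A.indicator 1 0 + p * A.indicator 1 1 := by
  simp only [measureReal_def, bernoulliNat, Measure.add_apply, Measure.smul_apply, smul_eq_mul,
    Measure.dirac_apply]
  by_cases h0 : 0 ∈ A <;> by_cases h1 : 1 ∈ A <;>
    simp [h0, h1, tsub_add_cancel_of_le (ENNReal.coe_le_one_iff.mpr hp),
      ENNReal.toReal_sub_of_le (ENNReal.coe_le_one_iff.mpr hp) ENNReal.one_ne_top]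

lemma map_eq_bernoulliNat {Ω : Type*} [MeasurableSpace Ω] {μ : Measure Ω} [IsProbabilityMeasure μ]
    {X : Ω → ℕ} (hX : Measurable X) (hX01 : ∀ ω, X ω = 0 ∨ X ω = 1) {p : ℝ≥0}
    (hp : μ {ω | X ω = 1} = p) : μ.map X = bernoulliNat p := by
  refine Measure.ext_of_singleton fun n ↦ ?_
  rw [Measure.map_apply hX (measurableSet_singleton n)]
  rcases n with _ | _ | n
  · have : X ⁻¹' {0} = (X ⁻¹' {1})ᶜ := by
      ext ω; rcases hX01 ω with h | h <;> simp [h]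
    rw [this, prob_compl_eq_one_sub (hX (measurableSet_singleton 1))]
    simp [bernoulliNat, ← hp, Set.preimage]
  · rw [show X ⁻¹' {1} = {ω | X ω = 1} from rfl, hp]
    simp [bernoulliNat]
  · have : X ⁻¹' {n + 2} = ∅ := by
      ext ω; rcases hX01 ω with h | h <;> simp [h]
    simp [this, bernoulliNat]

lemma poissonMeasure_zero : poissonMeasure 0 = Measure.dirac 0 := by
  refine Measure.ext_of_singleton fun n ↦ ?_
  rcases n with _ | n <;> simp [poissonMeasure_singleton]

lemma tvDistLE_bernoulliNat_poissonMeasure {p : ℝ≥0} (hp : p ≤ 1) :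
    TVDistLE (bernoulliNat p) (poissonMeasure p) ((p : ℝ) ^ 2) := by
  have := isProbabilityMeasure_bernoulliNat hp
  refine TVDistLE.of_forall_sub_le fun A _ ↦ ?_
  set e := Real.exp (-p)
  have he : 1 - (p : ℝ) ≤ e := by linarith [Real.add_one_le_exp (-p : ℝ)]
  have hexcess : (p : ℝ) - p * e ≤ p ^ 2 := by nlinarith [p.coe_nonneg]
  have h0 : (poissonMeasure p).real {0} = e := by simp [poissonMeasure_real_singleton, e]
  have h1 : (poissonMeasure p).real {1} = p * e := by
    simp [poissonMeasure_real_singleton, e, mul_comm]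
  have hpos : 0 ≤ (poissonMeasure p).real A := measureReal_nonneg
  rw [bernoulliNat_real_apply hp]
  by_cases hA0 : 0 ∈ A <;> by_cases hA1 : 1 ∈ A
  · have := measureReal_mono (μ := poissonMeasure p) (show {0} ∪ {1} ⊆ A by
      simp [Set.insert_subset_iff, hA0, hA1])
    rw [measureReal_union (by norm_num) (measurableSet_singleton 1), h0, h1] at this
    simp [hA0, hA1]
    linarith [sq_nonneg (p : ℝ)]
  · have := measureReal_mono (μ := poissonMeasure p) (Set.singleton_subset_iff.mpr hA0)
    simp [hA0, hA1]
    linarith [sq_nonneg (p : ℝ)]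
  · have := measureReal_mono (μ := poissonMeasure p) (Set.singleton_subset_iff.mpr hA1)
    simp [hA0, hA1]
    linarith [sq_nonneg (p : ℝ)]
  · simp [hA0, hA1]
    linarith [sq_nonneg (p : ℝ)]

lemma tvDistLE_map_poissonMeasure_of_bernoulli {Ω : Type*} [MeasurableSpace Ω] {μ : Measure Ω}
    [IsProbabilityMeasure μ] {X : Ω → ℕ} (hX : Measurable X) (hX01 : ∀ ω, X ω = 0 ∨ X ω = 1)
    {p : ℝ≥0} (hp : μ {ω | X ω = 1} = p) :
    TVDistLE (μ.map X) (poissonMeasure p) ((p : ℝ) ^ 2) := by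
  have hp1 : p ≤ 1 := by exact_mod_cast hp ▸ prob_le_one
  rw [map_eq_bernoulliNat hX hX01 hp]
  exact tvDistLE_bernoulliNat_poissonMeasure hp1

lemma tvDistLE_map_sum_poissonMeasure {ι Ω : Type*} [DecidableEq ι] [MeasurableSpace Ω]
    {μ : Measure Ω} [IsProbabilityMeasure μ] {X : ι → Ω → ℕ} {r : ι → ℝ≥0} {ε : ι → ℝ}
    (hX : ∀ i, Measurable (X i)) (hindep : iIndepFun X μ)
    (hclose : ∀ i, TVDistLE (μ.map (X i)) (poissonMeasure (r i)) (ε i)) (s : Finset ι) :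
    TVDistLE (μ.map (∑ i ∈ s, X i)) (poissonMeasure (∑ i ∈ s, r i)) (∑ i ∈ s, ε i) := by
  induction s using Finset.induction_on with
  | empty =>
    simpa [Pi.zero_def, Measure.map_const, poissonMeasure_zero] using TVDistLE.refl (.dirac 0)
  | insert j s hj ih =>
    have := Measure.isProbabilityMeasure_map (μ := μ) (hX j).aemeasurable
    rw [sum_insert hj, sum_insert hj, sum_insert hj,
      (hindep.indepFun_finsetSum_of_notMem hX hj).symm.map_add_eq_map_conv_map (hX j)
        (by fun_prop),
      ← poissonMeasure_conv_poissonMeasure]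
    exact TVDistLE.conv (hclose j) ih

/-- LeCam's inequality: if `S = I_1 + ⋯ + I_n` is a sum of independent Bernoulli random
variables with `P(I_i = 1) = p_i` and `Λ` is Poisson with mean `∑ p_i`, then for every
set `A ⊆ ℕ`, `|P(S ∈ A) - P(Λ ∈ A)| ≤ ∑ p_i²`. -/
theorem stmt1 {Ω : Type*} [MeasurableSpace Ω] (μ : Measure Ω) [IsProbabilityMeasure μ]
    (n : ℕ) (I : Fin n → Ω → ℕ) (p : Fin n → ℝ≥0)
    (hmeas : ∀ i, Measurable (I i))
    (hindep : iIndepFun I μ)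
    (hBer : ∀ i ω, I i ω = 0 ∨ I i ω = 1)
    (hp : ∀ i, μ {ω | I i ω = 1} = ENNReal.ofReal (p i)) :
    ∀ A : Set ℕ,
      |(μ {ω | (∑ i, I i ω) ∈ A}).toReal - ((poissonMeasure (∑ i, p i)) A).toReal|
        ≤ ∑ i, ((p i : ℝ)) ^ 2 := by
  intro A
  have hclose := tvDistLE_map_sum_poissonMeasure hmeas hindep
    (fun i ↦ tvDistLE_map_poissonMeasure_of_bernoulli (hmeas i) (hBer i)
      ((hp i).trans ENNReal.ofReal_coe_nnreal)) univ A .of_discrete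
  rwa [measureReal_def, measureReal_def,
    Measure.map_apply (by fun_prop) .of_discrete, Finset.sum_fn] at hclose
end

section
/- Let Y_1, ..., Y_n be iid nonnegative random variables with b_1 = E Y_1 < ∞, and let I be a finite set of positive integers. Define b_1(I) = Σ_{j∈I} Y_j j^{-1/2} and let \tilde{Y}_j = Y_j 1_{Y_j ≤ ε² j}, \tilde{b} = Σ_{j∈I} \tilde{Y}_j j^{-1/2}. Then E|\tilde{b} − E\tilde{b}| ≤ ε b_1^{1/2} |I|^{1/2}. -/
open MeasureTheory ProbabilityTheory Finset

/-!
Cauchy–Schwarz bounds `E|b̃ - E b̃|` by `√(Var b̃)`, and independence splits the variance into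
`∑_{j ∈ I} Var(Ỹ_j j^{-1/2})`. Each summand is at most `E(Ỹ_j² / j) ≤ ε² E Y_j = ε² b₁`,
because the truncation `Ỹ_j ≤ ε² j` gives `Ỹ_j² ≤ ε² j Y_j`.
-/

section Variance

variable {Ω : Type*} [MeasurableSpace Ω] {μ : Measure Ω}

/-- `(E|W|)² ≤ E W²` for `W = X - E X`, read off from `Var |W| ≥ 0`. -/
theorem integral_abs_sub_integral_le_sqrt_variance [IsProbabilityMeasure μ] {X : Ω → ℝ}
    (hX : MemLp X 2 μ) :
    ∫ ω, |X ω - ∫ ω', X ω' ∂μ| ∂μ ≤ √(Var[X; μ]) := by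
  set W : Ω → ℝ := fun ω => |X ω - ∫ ω', X ω' ∂μ|
  have hW : MemLp W 2 μ := (hX.sub (memLp_const _)).abs
  have hW_sq : ∫ ω, (W ^ 2) ω ∂μ = Var[X; μ] := by
    simp only [W, Pi.pow_apply, sq_abs]
    exact (variance_eq_integral hX.aemeasurable).symm
  have hvar := variance_nonneg W μ
  rw [variance_eq_sub hW, hW_sq] at hvar
  exact Real.le_sqrt_of_sq_le (by linarith)

theorem memLp_two_of_sq_le {X Y : Ω → ℝ} (hX : AEStronglyMeasurable X μ) (hY : Integrable Y μ)
    {c : ℝ} (h : ∀ ω, X ω ^ 2 ≤ c * Y ω) : MemLp X 2 μ :=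
  (memLp_two_iff_integrable_sq hX).2 <|
    (hY.const_mul c).mono' (hX.pow 2) (.of_forall fun ω => by
      rw [Real.norm_of_nonneg (sq_nonneg _)]; exact h ω)

theorem variance_le_of_sq_le [IsProbabilityMeasure μ] {X Y : Ω → ℝ}
    (hX : AEStronglyMeasurable X μ) (hY : Integrable Y μ) {c : ℝ} (h : ∀ ω, X ω ^ 2 ≤ c * Y ω) :
    Var[X; μ] ≤ c * ∫ ω, Y ω ∂μ :=
  calc Var[X; μ] ≤ ∫ ω, (X ^ 2) ω ∂μ := variance_le_expectation_sq hX
    _ ≤ ∫ ω, c * Y ω ∂μ :=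
      integral_mono (memLp_two_of_sq_le hX hY h).integrable_sq (hY.const_mul c) h
    _ = c * ∫ ω, Y ω ∂μ := integral_const_mul c _

end Variance

/-- The summand `Ỹ_j j^{-1/2}` of `b̃`, as a function of the value `y` of `Y_j`. -/
noncomputable def truncatedTerm (ε : ℝ) (j : ℕ) (y : ℝ) : ℝ :=
  (if y ≤ ε ^ 2 * j then y else 0) * (j : ℝ) ^ (-(1 / 2 : ℝ))

theorem measurable_truncatedTerm (ε : ℝ) (j : ℕ) : Measurable (truncatedTerm ε j) :=
  (Measurable.ite (measurableSet_le measurable_id measurable_const) measurable_id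
    measurable_const).mul_const _

theorem truncatedTerm_sq_le (ε : ℝ) (j : ℕ) {y : ℝ} (hy : 0 ≤ y) :
    truncatedTerm ε j y ^ 2 ≤ ε ^ 2 * y := by
  set t := if y ≤ ε ^ 2 * j then y else 0
  have ht_nonneg : 0 ≤ t := by unfold t; split_ifs <;> simp [hy]
  have ht_le : t ≤ y := by unfold t; split_ifs <;> simp [hy]
  have ht_sq : t ^ 2 ≤ ε ^ 2 * j * t := by
    unfold t; split_ifs with h
    · rw [sq]; exact mul_le_mul_of_nonneg_right h hy
    · simp
  have hj_inv : ((j : ℝ) ^ (-(1 / 2 : ℝ))) ^ 2 = (j : ℝ)⁻¹ := by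
    rw [← Real.rpow_natCast, ← Real.rpow_mul (Nat.cast_nonneg j)]
    norm_num [Real.rpow_neg_one]
  -- `j * j⁻¹ ≤ 1` also covers `j = 0`, where `0⁻¹ = 0`.
  have hj_mul_inv : (j : ℝ) * (j : ℝ)⁻¹ ≤ 1 := mul_inv_le_one
  calc truncatedTerm ε j y ^ 2 = t ^ 2 * (j : ℝ)⁻¹ := by rw [truncatedTerm, mul_pow, hj_inv]
    _ ≤ ε ^ 2 * j * t * (j : ℝ)⁻¹ := by gcongr
    _ = ε ^ 2 * t * ((j : ℝ) * (j : ℝ)⁻¹) := by ring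
    _ ≤ ε ^ 2 * t * 1 := by gcongr
    _ ≤ ε ^ 2 * y := by rw [mul_one]; gcongr

section IdenticallyDistributed

variable {Ω : Type*} [MeasurableSpace Ω] {μ : Measure Ω}
  {Y : ℕ → Ω → ℝ} (hnonneg : ∀ j ω, 0 ≤ Y j ω) (hident : ∀ j, IdentDistrib (Y j) (Y 1) μ μ)
  (hint : Integrable (Y 1) μ) (ε : ℝ)

include hnonneg hident hint

theorem memLp_truncatedTerm (j : ℕ) : MemLp (fun ω => truncatedTerm ε j (Y j ω)) 2 μ :=
  memLp_two_of_sq_le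
    ((measurable_truncatedTerm ε j).comp_aemeasurable
      (hident j).aemeasurable_fst).aestronglyMeasurable
    ((hident j).integrable_iff.2 hint) fun ω => truncatedTerm_sq_le ε j (hnonneg j ω)

theorem variance_truncatedTerm_le [IsProbabilityMeasure μ] (j : ℕ) :
    Var[fun ω => truncatedTerm ε j (Y j ω); μ] ≤ ε ^ 2 * ∫ ω, Y 1 ω ∂μ := by
  rw [← (hident j).integral_eq]
  exact variance_le_of_sq_le (memLp_truncatedTerm hnonneg hident hint ε j).1
    ((hident j).integrable_iff.2 hint) fun ω => truncatedTerm_sq_le ε j (hnonneg j ω)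

end IdenticallyDistributed

theorem stmt8_general {Ω : Type*} [MeasurableSpace Ω] (μ : Measure Ω) [IsProbabilityMeasure μ]
    (Y : ℕ → Ω → ℝ)
    (hnonneg : ∀ j ω, 0 ≤ Y j ω)
    (hindep : iIndepFun Y μ)
    (hident : ∀ j, IdentDistrib (Y j) (Y 1) μ μ)
    (hint : Integrable (Y 1) μ)
    (b₁ : ℝ) (hb₁ : b₁ = ∫ ω, Y 1 ω ∂μ)
    (I : Finset ℕ) (ε : ℝ) (hε : 0 < ε) :
    (∫ ω, |(∑ j ∈ I, (if Y j ω ≤ ε ^ 2 * j then Y j ω else 0) * (j : ℝ) ^ (-(1/2 : ℝ)))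
        - ∫ ω', (∑ j ∈ I, (if Y j ω' ≤ ε ^ 2 * j then Y j ω' else 0) *
            (j : ℝ) ^ (-(1/2 : ℝ))) ∂μ| ∂μ)
      ≤ ε * Real.sqrt b₁ * Real.sqrt I.card := by
  set Z : ℕ → Ω → ℝ := fun j ω => truncatedTerm ε j (Y j ω)
  have hZ_indep : Set.Pairwise I fun i j => Z i ⟂ᵢ[μ] Z j := fun i _ j _ hij =>
    (hindep.indepFun hij).comp (measurable_truncatedTerm ε i) (measurable_truncatedTerm ε j)
  have hvar : Var[∑ j ∈ I, Z j; μ] ≤ I.card * (ε ^ 2 * b₁) := by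
    rw [IndepFun.variance_sum (fun j _ => memLp_truncatedTerm hnonneg hident hint ε j) hZ_indep,
      hb₁, ← nsmul_eq_mul, ← sum_const]
    exact sum_le_sum fun j _ => variance_truncatedTerm_le hnonneg hident hint ε j
  calc _ = ∫ ω, |(∑ j ∈ I, Z j) ω - ∫ ω', (∑ j ∈ I, Z j) ω' ∂μ| ∂μ := by
        simp only [Z, Finset.sum_apply, truncatedTerm]
    _ ≤ √(Var[∑ j ∈ I, Z j; μ]) := integral_abs_sub_integral_le_sqrt_variance
        (memLp_finsetSum' _ fun j _ => memLp_truncatedTerm hnonneg hident hint ε j)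
    _ ≤ √(I.card * (ε ^ 2 * b₁)) := Real.sqrt_le_sqrt hvar
    _ = ε * √b₁ * √I.card := by
        rw [Real.sqrt_mul (Nat.cast_nonneg _), Real.sqrt_mul (sq_nonneg ε), Real.sqrt_sq hε.le]
        ring

/-- For iid nonnegative `Y_j` with mean `b₁`, a finite set `I` of positive integers and
`ε > 0`, the truncated sum `b̃ = ∑_{j∈I} Y_j 1_{Y_j ≤ ε² j} j^{-1/2}` satisfies
`E|b̃ - E b̃| ≤ ε √b₁ √|I|`. -/
theorem stmt8 {Ω : Type*} [MeasurableSpace Ω] (μ : Measure Ω) [IsProbabilityMeasure μ]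
    (Y : ℕ → Ω → ℝ) (hmeas : ∀ j, Measurable (Y j))
    (hnonneg : ∀ j ω, 0 ≤ Y j ω)
    (hindep : iIndepFun Y μ)
    (hident : ∀ j, IdentDistrib (Y j) (Y 1) μ μ)
    (hint : Integrable (Y 1) μ)
    (b₁ : ℝ) (hb₁ : b₁ = ∫ ω, Y 1 ω ∂μ)
    (I : Finset ℕ) (hI : ∀ j ∈ I, 0 < j) (ε : ℝ) (hε : 0 < ε) :
    (∫ ω, |(∑ j ∈ I, (if Y j ω ≤ ε ^ 2 * j then Y j ω else 0) * (j : ℝ) ^ (-(1/2 : ℝ)))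
        - ∫ ω', (∑ j ∈ I, (if Y j ω' ≤ ε ^ 2 * j then Y j ω' else 0) *
            (j : ℝ) ^ (-(1/2 : ℝ))) ∂μ| ∂μ)
      ≤ ε * Real.sqrt b₁ * Real.sqrt I.card :=
  stmt8_general μ Y hnonneg hindep hident hint b₁ hb₁ I ε hε
end

section
/- Let X_1, X_2, ... be iid nonnegative random variables with E X_1² < ∞. Then for every ε ∈ (0,1), defining X̂_k = X_k 1_{X_k² < ε² k}, the truncated centered sum R̂ = t^{-1/2} Σ_{k∈T_t} (E X̂_k² − X̂_k²) k^{(2ν)^{-1} − 1} satisfies P(R̂ > ε^{1/2}) ≤ c ε for a constant c independent of ε and t, where T_t = {k : a t^ν ≤ k ≤ b t^ν} and ν > 1, b > a > 0. -/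
open MeasureTheory ProbabilityTheory Finset

/-!
Write `Ẑ_k = X̂_k²`. Then `0 ≤ Ẑ_k ≤ ε² k` and `E Ẑ_k ≤ E X₁²`, so `Var Ẑ_k ≤ ε² k E X₁²`.
By independence the variance of the weighted sum `∑ (E Ẑ_k - Ẑ_k) k^{1/(2ν) - 1}` is at most
`ε² E X₁² ∑_{k ∈ T_t} k^{1/ν - 1}`, and this sum is `O(t)`: `T_t` has at most `b t^ν` elements,
each term being at most `(a t^ν)^{1/ν - 1}`. Chebyshev's inequality at level `√(ε t)` gives
the bound `O(ε² t) / (ε t) = O(ε)`.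
-/

noncomputable def sqTrunc (r x : ℝ) : ℝ := if x ^ 2 < r then x else 0

lemma measurable_sqTrunc (r : ℝ) : Measurable (sqTrunc r) :=
  Measurable.ite (measurableSet_lt (measurable_id.pow_const 2) measurable_const) measurable_id
    measurable_const

lemma sq_sqTrunc_le_sq (r x : ℝ) : sqTrunc r x ^ 2 ≤ x ^ 2 := by
  unfold sqTrunc
  split_ifs <;> simp [sq_nonneg]

lemma sq_sqTrunc_le {r : ℝ} (hr : 0 ≤ r) (x : ℝ) : sqTrunc r x ^ 2 ≤ r := by
  unfold sqTrunc
  split_ifs with h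
  · exact h.le
  · simpa using hr

lemma sum_Icc_ceil_floor_rpow_le {a b x p : ℝ} (ha : 0 < a) (hb : 0 ≤ b) (hx : 0 < x)
    (hp : p ≤ 0) : ∑ k ∈ Icc ⌈a * x⌉₊ ⌊b * x⌋₊, (k : ℝ) ^ p ≤ b * a ^ p * x ^ (1 + p) := by
  have hax : 0 < a * x := mul_pos ha hx
  have hterm : ∀ k ∈ Icc ⌈a * x⌉₊ ⌊b * x⌋₊, (k : ℝ) ^ p ≤ (a * x) ^ p := fun k hk =>
    Real.rpow_le_rpow_of_nonpos hax ((Nat.le_ceil _).trans (mod_cast (mem_Icc.mp hk).1)) hp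
  have hcard : ((Icc ⌈a * x⌉₊ ⌊b * x⌋₊).card : ℝ) ≤ b * x := by
    have hceil : 1 ≤ ⌈a * x⌉₊ := Nat.one_le_ceil_iff.mpr hax
    calc ((Icc ⌈a * x⌉₊ ⌊b * x⌋₊).card : ℝ) ≤ ⌊b * x⌋₊ := by
          rw [Nat.card_Icc]; exact_mod_cast (by omega)
      _ ≤ b * x := Nat.floor_le (mul_nonneg hb hx.le)
  calc ∑ k ∈ Icc ⌈a * x⌉₊ ⌊b * x⌋₊, (k : ℝ) ^ p
      ≤ (Icc ⌈a * x⌉₊ ⌊b * x⌋₊).card * (a * x) ^ p := by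
        simpa using sum_le_card_nsmul _ _ _ hterm
    _ ≤ b * x * (a * x) ^ p := by gcongr
    _ = b * a ^ p * x ^ (1 + p) := by
        rw [Real.mul_rpow ha.le hx.le, Real.rpow_add hx, Real.rpow_one]; ring

lemma sum_Icc_ceil_floor_rpow_inv_sub_one_le {a b t ν : ℝ} (ha : 0 < a) (hb : 0 ≤ b) (ht : 0 < t)
    (hν : 1 ≤ ν) :
    ∑ k ∈ Icc ⌈a * t ^ ν⌉₊ ⌊b * t ^ ν⌋₊, (k : ℝ) ^ (ν⁻¹ - 1) ≤ b * a ^ (ν⁻¹ - 1) * t := by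
  have h := sum_Icc_ceil_floor_rpow_le ha hb (Real.rpow_pos_of_pos ht ν)
    (sub_nonpos.mpr (inv_le_one_of_one_le₀ hν))
  rwa [add_sub_cancel, Real.rpow_rpow_inv ht.le (by positivity)] at h

lemma sq_rpow_neg_half_mul_rpow_mul_self {x y : ℝ} (hx : 0 < x) (hy : 0 < y) (ν : ℝ) :
    (x ^ (-(1/2 : ℝ)) * y ^ ((2 * ν)⁻¹ - 1)) ^ 2 * y = x⁻¹ * y ^ (ν⁻¹ - 1) := by
  have hx_exp : -(1/2 : ℝ) * (2 : ℕ) = -1 := by norm_num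
  have hy_exp : ((2 * ν)⁻¹ - 1) * (2 : ℕ) + 1 = ν⁻¹ - 1 := by push_cast; ring
  rw [mul_pow, ← Real.rpow_mul_natCast hx.le, ← Real.rpow_mul_natCast hy.le, mul_assoc,
    ← Real.rpow_add_one hy.ne', hx_exp, hy_exp, Real.rpow_neg_one]

section

variable {Ω : Type*} [MeasurableSpace Ω] {μ : Measure Ω} [IsProbabilityMeasure μ]

lemma variance_le_mul_integral_of_nonneg_of_le {Z : Ω → ℝ} {C : ℝ} (hZ : AEMeasurable Z μ)
    (h0 : ∀ ω, 0 ≤ Z ω) (hC : ∀ ω, Z ω ≤ C) : variance Z μ ≤ C * μ[Z] := by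
  have hmean : 0 ≤ μ[Z] := integral_nonneg h0
  calc variance Z μ ≤ (C - μ[Z]) * (μ[Z] - 0) :=
        variance_le_sub_mul_sub (ae_of_all _ fun ω => ⟨h0 ω, hC ω⟩) hZ
    _ ≤ C * μ[Z] := by nlinarith

lemma memLp_two_sq_sqTrunc {Y : Ω → ℝ} (hY : AEMeasurable Y μ) {r : ℝ} (hr : 0 ≤ r) :
    MemLp (fun ω => sqTrunc r (Y ω) ^ 2) 2 μ :=
  memLp_of_bounded (a := 0) (b := r) (ae_of_all _ fun _ => ⟨sq_nonneg _, sq_sqTrunc_le hr _⟩)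
    (((measurable_sqTrunc r).comp_aemeasurable hY).pow_const 2).aestronglyMeasurable 2

lemma ProbabilityTheory.IdentDistrib.variance_sq_sqTrunc_le {Ω' : Type*} [MeasurableSpace Ω'] {μ' : Measure Ω'}
    {Y : Ω → ℝ} {Y' : Ω' → ℝ} (h : IdentDistrib Y Y' μ μ')
    (hY' : Integrable (fun ω => Y' ω ^ 2) μ') {r : ℝ} (hr : 0 ≤ r) :
    variance (fun ω => sqTrunc r (Y ω) ^ 2) μ ≤ r * ∫ ω, Y' ω ^ 2 ∂μ' := by
  have hsq := h.comp (measurable_id.pow_const 2 : Measurable fun x : ℝ => x ^ 2)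
  calc variance (fun ω => sqTrunc r (Y ω) ^ 2) μ ≤ r * ∫ ω, sqTrunc r (Y ω) ^ 2 ∂μ :=
        variance_le_mul_integral_of_nonneg_of_le
          (((measurable_sqTrunc r).comp_aemeasurable h.aemeasurable_fst).pow_const 2)
          (fun _ => sq_nonneg _) fun _ => sq_sqTrunc_le hr _
    _ ≤ r * ∫ ω, Y ω ^ 2 ∂μ := mul_le_mul_of_nonneg_left
        (integral_mono ((memLp_two_sq_sqTrunc h.aemeasurable_fst hr).integrable one_le_two)
          (hsq.integrable_iff.mpr hY') fun _ => sq_sqTrunc_le_sq _ _) hr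
    _ = r * ∫ ω, Y' ω ^ 2 ∂μ' := congrArg (r * ·) hsq.integral_eq

lemma measure_lt_sum_centered_mul_le {ι : Type*} {Z : ι → Ω → ℝ} (hZ : ∀ i, MemLp (Z i) 2 μ)
    (hindep : iIndepFun Z μ) (s : Finset ι) (w : ι → ℝ) {c : ℝ} (hc : 0 < c) :
    (μ {ω | c < ∑ i ∈ s, (μ[Z i] - Z i ω) * w i}).toReal
      ≤ (∑ i ∈ s, w i ^ 2 * variance (Z i) μ) / c ^ 2 := by
  set Y : ι → Ω → ℝ := fun i ω => (μ[Z i] - Z i ω) * w i with hYdef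
  have hY : ∀ i, MemLp (Y i) 2 μ := fun i => ((memLp_const _).sub (hZ i)).mul_const (w i)
  have hYmean : ∀ i, μ[Y i] = 0 := fun i => by
    rw [hYdef, integral_mul_const, integral_sub (integrable_const _)
      ((hZ i).integrable one_le_two)]
    simp
  have hYvar : ∀ i, variance (Y i) μ = w i ^ 2 * variance (Z i) μ := fun i => by
    rw [hYdef, variance_mul_const, variance_const_sub (hZ i).aestronglyMeasurable, mul_comm]
  have hYindep : iIndepFun Y μ :=
    hindep.comp (fun i (x : ℝ) => (∫ ω, Z i ω ∂μ - x) * w i) fun i => by fun_prop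
  have hS : MemLp (∑ i ∈ s, Y i) 2 μ := memLp_finsetSum' s fun i _ => hY i
  have hSmean : μ[∑ i ∈ s, Y i] = 0 := by
    simp_rw [Finset.sum_apply]
    rw [integral_finsetSum s fun i _ => (hY i).integrable one_le_two]
    simp [hYmean]
  have hSvar : variance (∑ i ∈ s, Y i) μ = ∑ i ∈ s, w i ^ 2 * variance (Z i) μ := by
    rw [IndepFun.variance_sum (fun i _ => hY i) fun i _ j _ hij => hYindep.indepFun hij]
    simp [hYvar]
  have hsub : {ω | c < ∑ i ∈ s, Y i ω} ⊆ {ω | c ≤ |(∑ i ∈ s, Y i) ω - μ[∑ i ∈ s, Y i]|} :=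
    fun ω hω => by
      rw [Set.mem_ofPred_eq, hSmean, sub_zero, Finset.sum_apply]
      exact hω.le.trans (le_abs_self _)
  rw [← hSvar]
  exact ENNReal.toReal_le_of_le_ofReal (div_nonneg (variance_nonneg _ _) (sq_nonneg _))
    ((measure_mono hsub).trans (meas_ge_le_variance_div_sq hS hc))

end

theorem stmt18_general {Ω : Type*} [MeasurableSpace Ω] (μ : Measure Ω) [IsProbabilityMeasure μ]
    (X : ℕ → Ω → ℝ) (hmeas : ∀ k, Measurable (X k))
    (hindep : iIndepFun X μ)
    (hident : ∀ k, IdentDistrib (X k) (X 1) μ μ)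
    (hL2 : Integrable (fun ω => X 1 ω ^ 2) μ)
    (ν a b : ℝ) (hν : 1 < ν) (ha : 0 < a) (hab : a < b) :
    ∃ c : ℝ, ∀ ε : ℝ, 0 < ε → ε < 1 → ∀ t : ℕ, 1 ≤ t →
      (μ {ω | Real.sqrt ε <
          (t : ℝ) ^ (-(1/2 : ℝ)) *
            ∑ k ∈ Finset.Icc ⌈a * (t : ℝ) ^ ν⌉₊ ⌊b * (t : ℝ) ^ ν⌋₊,
              ((∫ ω', (if (X k ω') ^ 2 < ε ^ 2 * k then X k ω' else 0) ^ 2 ∂μ)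
                  - (if (X k ω) ^ 2 < ε ^ 2 * k then X k ω else 0) ^ 2) *
                (k : ℝ) ^ ((2 * ν)⁻¹ - 1)}).toReal
        ≤ c * ε := by
  set M := ∫ ω, X 1 ω ^ 2 ∂μ
  have hM : 0 ≤ M := integral_nonneg fun ω => sq_nonneg _
  refine ⟨b * a ^ (ν⁻¹ - 1) * M, fun ε hε _ t ht => ?_⟩
  have ht0 : (0 : ℝ) < t := by exact_mod_cast ht
  set T := Icc ⌈a * (t : ℝ) ^ ν⌉₊ ⌊b * (t : ℝ) ^ ν⌋₊
  set Z : ℕ → Ω → ℝ := fun k ω => sqTrunc (ε ^ 2 * k) (X k ω) ^ 2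
  set w : ℕ → ℝ := fun k => (t : ℝ) ^ (-(1/2 : ℝ)) * (k : ℝ) ^ ((2 * ν)⁻¹ - 1)
  have hZ_indep : iIndepFun Z μ :=
    hindep.comp (fun k x => sqTrunc (ε ^ 2 * k) x ^ 2) fun k => (measurable_sqTrunc _).pow_const 2
  have hterm : ∀ k ∈ T, w k ^ 2 * variance (Z k) μ ≤ ε ^ 2 * M * (t : ℝ)⁻¹ * k ^ (ν⁻¹ - 1) := by
    intro k hk
    have hk : (0 : ℝ) < k := by
      have := Nat.one_le_ceil_iff.mpr (by positivity : 0 < a * (t : ℝ) ^ ν)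
      exact_mod_cast this.trans (mem_Icc.mp hk).1
    calc w k ^ 2 * variance (Z k) μ ≤ w k ^ 2 * (ε ^ 2 * k * M) := by
          gcongr; exact (hident k).variance_sq_sqTrunc_le hL2 (by positivity)
      _ = _ := by linear_combination ε ^ 2 * M * sq_rpow_neg_half_mul_rpow_mul_self ht0 hk ν
  calc (μ _).toReal = (μ {ω | √ε < ∑ k ∈ T, (μ[Z k] - Z k ω) * w k}).toReal := by
        congr 2
        ext ω
        rw [Set.mem_ofPred_eq, Set.mem_ofPred_eq, mul_sum]
        refine Iff.of_eq (congrArg _ (sum_congr rfl fun k _ => ?_))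
        simp only [Z, w, sqTrunc]
        ring
    _ ≤ (∑ k ∈ T, w k ^ 2 * variance (Z k) μ) / √ε ^ 2 :=
        measure_lt_sum_centered_mul_le (fun k => memLp_two_sq_sqTrunc (hmeas k).aemeasurable
          (by positivity)) hZ_indep T w (Real.sqrt_pos.2 hε)
    _ ≤ (ε ^ 2 * M * (t : ℝ)⁻¹ * ∑ k ∈ T, (k : ℝ) ^ (ν⁻¹ - 1)) / ε := by
        rw [Real.sq_sqrt hε.le, mul_sum]
        exact div_le_div_of_nonneg_right (sum_le_sum hterm) hε.le
    _ ≤ (ε ^ 2 * M * (t : ℝ)⁻¹ * (b * a ^ (ν⁻¹ - 1) * t)) / ε := by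
        gcongr
        exact sum_Icc_ceil_floor_rpow_inv_sub_one_le ha (ha.trans hab).le ht0 hν.le
    _ = b * a ^ (ν⁻¹ - 1) * M * ε := by field_simp

/-- For iid nonnegative `X_k` with `E X₁² < ∞`, `ν > 1`, `0 < a < b`, there is a constant
`c` independent of `ε` and `t` such that for every `ε ∈ (0,1)` and `t ≥ 1`, with
`X̂_k = X_k 1_{X_k² < ε² k}`, `T_t = {k : a t^ν ≤ k ≤ b t^ν}` and
`R̂ = t^{-1/2} ∑_{k∈T_t} (E X̂_k² - X̂_k²) k^{1/(2ν)-1}`, we have `P(R̂ > √ε) ≤ c ε`. -/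
theorem stmt18 {Ω : Type*} [MeasurableSpace Ω] (μ : Measure Ω) [IsProbabilityMeasure μ]
    (X : ℕ → Ω → ℝ) (hmeas : ∀ k, Measurable (X k))
    (hnonneg : ∀ k ω, 0 ≤ X k ω)
    (hindep : iIndepFun X μ)
    (hident : ∀ k, IdentDistrib (X k) (X 1) μ μ)
    (hL2 : Integrable (fun ω => X 1 ω ^ 2) μ)
    (ν a b : ℝ) (hν : 1 < ν) (ha : 0 < a) (hab : a < b) :
    ∃ c : ℝ, ∀ ε : ℝ, 0 < ε → ε < 1 → ∀ t : ℕ, 1 ≤ t →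
      (μ {ω | Real.sqrt ε <
          (t : ℝ) ^ (-(1/2 : ℝ)) *
            ∑ k ∈ Finset.Icc ⌈a * (t : ℝ) ^ ν⌉₊ ⌊b * (t : ℝ) ^ ν⌋₊,
              ((∫ ω', (if (X k ω') ^ 2 < ε ^ 2 * k then X k ω' else 0) ^ 2 ∂μ)
                  - (if (X k ω) ^ 2 < ε ^ 2 * k then X k ω else 0) ^ 2) *
                (k : ℝ) ^ ((2 * ν)⁻¹ - 1)}).toReal
        ≤ c * ε :=
  stmt18_general μ X hmeas hindep hident hL2 ν a b hν ha hab
end
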